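/- arXiv:cmp-lg/9709013 — 6 statements merged into one kernel-verified Lean document; each statement's English description precedes it below -/
import Mathlib

section
/- For typed feature structures A and B: A ⊑ B if and only if Abs(A) ≼ Abs(B). -/
def deltaStar {F N : Type*} (d : N → F → Option N) : N → List F → Option N
  | q, [] => some q
  | q, f :: rest => (d q f).bind fun q' => deltaStar d q' rest

/-- A typed feature structure: a finite rooted graph with feature-labelled arcs,
all of whose nodes are reachable from the root. -/
structure TFS (F N : Type*) where
  Q : Finset N
  root : N
  root_mem : root ∈ Q
  delta : N → F → Option N
  delta_dom : ∀ q f q', delta q f = some q' → q ∈ Q ∧ q' ∈ Q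
  reach : ∀ q ∈ Q, ∃ π : List F, deltaStar delta root π = some q

/-- The value `δ(q̄, π)` of a path from the root. -/
def TFS.val {F N : Type*} (A : TFS F N) (π : List F) : Option N :=
  deltaStar A.delta A.root π

/-- `Π(A)`, the set of paths of `A`. -/
def TFS.paths {F N : Type*} (A : TFS F N) : Set (List F) :=
  {π | (A.val π).isSome}

/-- A TFS is cyclic if some node returns to itself via a nonempty path. -/
def TFS.Cyclic {F N : Type*} (A : TFS F N) : Prop :=
  ∃ q ∈ A.Q, ∃ α : List F, α ≠ [] ∧ deltaStar A.delta q α = some q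

/-- Subsumption of TFSs via a subsumption morphism. -/
def Subsumes {F N T : Type*} [PartialOrder T] (θ : N → T) (A B : TFS F N) : Prop :=
  ∃ h : N → N,
    (∀ q ∈ A.Q, h q ∈ B.Q) ∧
    h A.root = B.root ∧
    (∀ q ∈ A.Q, θ q ≤ θ (h q)) ∧
    (∀ q f q', A.delta q f = some q' → B.delta (h q) f = some (h q'))

/-- Bounded completeness: every up-bounded subset has a least upper bound. -/
def BddComplete (T : Type*) [PartialOrder T] : Prop :=
  ∀ S : Set T, (∃ u, ∀ t ∈ S, t ≤ u) → ∃ l, IsLUB S l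

/-- A pre-abstract feature structure: a partial assignment of types to paths
(whose domain is the path set `Π`) together with a reentrancy relation. -/
structure PreAFS (F T : Type*) where
  theta : List F → Option T
  rel : List F → List F → Prop

/-- The path set `Π` of a pre-AFS. -/
def PreAFS.dom {F T : Type*} (A : PreAFS F T) : Set (List F) :=
  {π | (A.theta π).isSome}

/-- The pre-AFS conditions: `Π` is nonempty and `≈ ⊆ Π × Π`. -/
def IsPreAFS {F T : Type*} (A : PreAFS F T) : Prop :=
  A.dom.Nonempty ∧ ∀ π₁ π₂, A.rel π₁ π₂ → π₁ ∈ A.dom ∧ π₂ ∈ A.dom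

/-- `Π` is prefix-closed. -/
def PrefixClosed {F T : Type*} (A : PreAFS F T) : Prop :=
  ∀ π α : List F, π ++ α ∈ A.dom → π ∈ A.dom

/-- Fusion-closedness. -/
def FusionClosed {F T : Type*} (A : PreAFS F T) : Prop :=
  ∀ π π' α α' : List F, π ++ α ∈ A.dom → π' ++ α' ∈ A.dom → A.rel π π' →
    π ++ α' ∈ A.dom ∧ π' ++ α ∈ A.dom ∧
    A.rel (π ++ α') (π' ++ α') ∧ A.rel (π' ++ α) (π ++ α)

/-- `≈` is an equivalence relation on `Π`. -/
def EquivOnDom {F T : Type*} (A : PreAFS F T) : Prop :=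
  (∀ π ∈ A.dom, A.rel π π) ∧
  (∀ π₁ π₂, A.rel π₁ π₂ → A.rel π₂ π₁) ∧
  (∀ π₁ π₂ π₃, A.rel π₁ π₂ → A.rel π₂ π₃ → A.rel π₁ π₃)

/-- `≈` has finitely many equivalence classes. -/
def FiniteIndex {F T : Type*} (A : PreAFS F T) : Prop :=
  {C : Set (List F) | ∃ π ∈ A.dom, C = {π' | A.rel π π'}}.Finite

/-- `Θ` respects the equivalence `≈`. -/
def RespectsRel {F T : Type*} (A : PreAFS F T) : Prop :=
  ∀ π₁ π₂, A.rel π₁ π₂ → A.theta π₁ = A.theta π₂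

/-- Abstract feature structures. -/
def IsAFS {F T : Type*} (A : PreAFS F T) : Prop :=
  IsPreAFS A ∧ PrefixClosed A ∧ FusionClosed A ∧
    EquivOnDom A ∧ FiniteIndex A ∧ RespectsRel A

/-- Bounded completeness: every up-bounded subset has a least upper bound. -/
def BddCompleteTypes (T : Type*) [PartialOrder T] : Prop :=
  ∀ S : Set T, (∃ u, ∀ t ∈ S, t ≤ u) → ∃ l, IsLUB S l

/-- The abstraction of a TFS: `Π_A = Π(A)`, `Θ_A(π) = θ(δ(q̄,π))`,
and `π₁ ≈_A π₂` iff both paths lead to the same node. -/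
def Abs {F N T : Type*} (θ : N → T) (A : TFS F N) : PreAFS F T :=
  ⟨fun π => (A.val π).map θ,
   fun π₁ π₂ => ∃ q, A.val π₁ = some q ∧ A.val π₂ = some q⟩

/-- The order `≼` on (pre-)AFSs. -/
def AbsLE {F T : Type*} [PartialOrder T] (A B : PreAFS F T) : Prop :=
  A.dom ⊆ B.dom ∧
  (∀ π₁ π₂, A.rel π₁ π₂ → B.rel π₁ π₂) ∧
  ∀ π ∈ A.dom, ∀ t₁ t₂ : T, A.theta π = some t₁ → B.theta π = some t₂ → t₁ ≤ t₂

/-! A subsumption morphism transports every path of `A` to the same path of `B`, so it carries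
paths, reentrancies and (increasing) types over to `B`. Conversely, every node of `A` is reached
by some path; sending it to the node of `B` at that path is independent of the chosen path
because `≼` preserves reentrancy, and a one-feature extension of the path shows that this map
commutes with the feature arcs. -/

section DeltaStar

variable {F N : Type*}

lemma deltaStar_append (d : N → F → Option N) (q : N) (π α : List F) :
    deltaStar d q (π ++ α) = (deltaStar d q π).bind (deltaStar d · α) := by
  induction π generalizing q with
  | nil => rfl
  | cons f rest ih => simp [deltaStar, ih, Option.bind_assoc]

lemma deltaStar_append_singleton (d : N → F → Option N) (q : N) (π : List F) (f : F) :
    deltaStar d q (π ++ [f]) = (deltaStar d q π).bind (d · f) := by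
  simp [deltaStar_append, deltaStar]

lemma deltaStar_of_hom {N' : Type*} {d : N → F → Option N} {d' : N' → F → Option N'}
    {h : N → N'} (hd : ∀ q f q', d q f = some q' → d' (h q) f = some (h q')) :
    ∀ (π : List F) {q q' : N}, deltaStar d q π = some q' → deltaStar d' (h q) π = some (h q')
  | [], _, _, hq => by cases hq; rfl
  | f :: rest, q, _, hq => by
    obtain ⟨q₁, hq₁, hrest⟩ := Option.bind_eq_some_iff.mp hq
    simpa [deltaStar, hd q f q₁ hq₁] using deltaStar_of_hom hd rest hrest

lemma TFS.deltaStar_mem (A : TFS F N) :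
    ∀ (π : List F) {q q' : N}, q ∈ A.Q → deltaStar A.delta q π = some q' → q' ∈ A.Q
  | [], _, _, hq, hq' => by cases hq'; exact hq
  | f :: rest, q, _, _, hq' => by
    obtain ⟨q₁, hq₁, hrest⟩ := Option.bind_eq_some_iff.mp hq'
    exact A.deltaStar_mem rest (A.delta_dom q f q₁ hq₁).2 hrest

lemma TFS.val_mem (A : TFS F N) {π : List F} {q : N} (h : A.val π = some q) : q ∈ A.Q :=
  A.deltaStar_mem π A.root_mem h

lemma TFS.val_nil (A : TFS F N) : A.val [] = some A.root := rfl

lemma TFS.exists_val_eq_some (A : TFS F N) {q : N} (hq : q ∈ A.Q) : ∃ π, A.val π = some q :=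
  A.reach q hq

lemma TFS.val_append_singleton (A : TFS F N) (π : List F) (f : F) :
    A.val (π ++ [f]) = (A.val π).bind (A.delta · f) :=
  deltaStar_append_singleton A.delta A.root π f

end DeltaStar

section Abstraction

variable {F N T : Type*}

lemma mem_abs_dom_iff (θ : N → T) (A : TFS F N) (π : List F) :
    π ∈ (Abs θ A).dom ↔ ∃ q, A.val π = some q := by
  simp [PreAFS.dom, Abs, Option.isSome_iff_exists]

/-- Between abstractions the domain condition of `≼` is the reentrancy condition at `π ≈ π`. -/
lemma absLE_abs_iff [PartialOrder T] (θ : N → T) (A B : TFS F N) :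
    AbsLE (Abs θ A) (Abs θ B) ↔
      (∀ π₁ π₂ q, A.val π₁ = some q → A.val π₂ = some q →
        ∃ q', B.val π₁ = some q' ∧ B.val π₂ = some q') ∧
      ∀ π q q', A.val π = some q → B.val π = some q' → θ q ≤ θ q' := by
  constructor
  · rintro ⟨-, hrel, hθ⟩
    refine ⟨fun π₁ π₂ q h₁ h₂ => hrel π₁ π₂ ⟨q, h₁, h₂⟩, fun π q q' hA hB => ?_⟩
    exact hθ π ((mem_abs_dom_iff θ A π).2 ⟨q, hA⟩) _ _ (by simp [Abs, hA]) (by simp [Abs, hB])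
  · rintro ⟨hrel, hθ⟩
    refine ⟨fun π hπ => ?_, fun π₁ π₂ ⟨q, h₁, h₂⟩ => hrel π₁ π₂ q h₁ h₂, ?_⟩
    · obtain ⟨q, hq⟩ := (mem_abs_dom_iff θ A π).1 hπ
      obtain ⟨q', hq', -⟩ := hrel π π q hq hq
      exact (mem_abs_dom_iff θ B π).2 ⟨q', hq'⟩
    · intro π _ t₁ t₂ h₁ h₂
      obtain ⟨q, hq, rfl⟩ := Option.map_eq_some_iff.1 h₁
      obtain ⟨q', hq', rfl⟩ := Option.map_eq_some_iff.1 h₂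
      exact hθ π q q' hq hq'

lemma Subsumes.absLE [PartialOrder T] {θ : N → T} {A B : TFS F N} (hAB : Subsumes θ A B) :
    AbsLE (Abs θ A) (Abs θ B) := by
  obtain ⟨h, -, hroot, hθ, hδ⟩ := hAB
  have hval : ∀ π q, A.val π = some q → B.val π = some (h q) := fun π _ hq => by
    simpa [TFS.val, hroot] using deltaStar_of_hom hδ π hq
  refine (absLE_abs_iff θ A B).2 ⟨fun π₁ π₂ q h₁ h₂ => ⟨h q, hval _ _ h₁, hval _ _ h₂⟩, ?_⟩
  intro π q q' hA hB
  rw [hval π q hA, Option.some_inj] at hB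
  exact hB ▸ hθ q (A.val_mem hA)

end Abstraction

section InducedMap

variable {F N : Type*}

open Classical in
noncomputable def TFS.pathMap (A B : TFS F N) (q : N) : N :=
  if hq : ∃ π, A.val π = some q then (B.val hq.choose).getD q else q

variable {A B : TFS F N}
  (hrel : ∀ π₁ π₂ q, A.val π₁ = some q → A.val π₂ = some q →
    ∃ q', B.val π₁ = some q' ∧ B.val π₂ = some q')
include hrel

lemma TFS.val_pathMap {π : List F} {q : N} (hπ : A.val π = some q) :
    B.val π = some (A.pathMap B q) := by
  have hq : ∃ π, A.val π = some q := ⟨π, hπ⟩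
  obtain ⟨q', hq', hσ⟩ := hrel π hq.choose q hπ hq.choose_spec
  simp [TFS.pathMap, hq, hσ, hq']

lemma TFS.delta_pathMap {q q' : N} {f : F} (hδ : A.delta q f = some q') :
    B.delta (A.pathMap B q) f = some (A.pathMap B q') := by
  obtain ⟨π, hπ⟩ := A.exists_val_eq_some (A.delta_dom q f q' hδ).1
  have hπf : A.val (π ++ [f]) = some q' := by simp [A.val_append_singleton, hπ, hδ]
  simpa [B.val_append_singleton, TFS.val_pathMap hrel hπ] using TFS.val_pathMap hrel hπf

lemma TFS.pathMap_root : A.pathMap B A.root = B.root :=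
  Option.some_inj.1 ((TFS.val_pathMap hrel A.val_nil).symm.trans B.val_nil)

lemma TFS.pathMap_mem {q : N} (hq : q ∈ A.Q) : A.pathMap B q ∈ B.Q := by
  obtain ⟨π, hπ⟩ := A.exists_val_eq_some hq
  exact B.val_mem (TFS.val_pathMap hrel hπ)

end InducedMap

theorem subsumes_iff_absLE_general
    {F N T : Type*} [PartialOrder T] (θ : N → T)
    (A B : TFS F N) :
    Subsumes θ A B ↔ AbsLE (Abs θ A) (Abs θ B) := by
  refine ⟨Subsumes.absLE, fun hAB => ?_⟩
  obtain ⟨hrel, hθ⟩ := (absLE_abs_iff θ A B).1 hAB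
  refine ⟨A.pathMap B, fun q => TFS.pathMap_mem hrel, TFS.pathMap_root hrel, fun q hq => ?_,
    fun q f q' => TFS.delta_pathMap hrel⟩
  obtain ⟨π, hπ⟩ := A.exists_val_eq_some hq
  exact hθ π q _ hπ (TFS.val_pathMap hrel hπ)

/-- `A ⊑ B` iff `Abs(A) ≼ Abs(B)`. -/
theorem subsumes_iff_absLE
    {F N T : Type*} [Finite F] [Finite T] [PartialOrder T] [Infinite N]
    (hbc : BddComplete T) (θ : N → T)
    (A B : TFS F N) :
    Subsumes θ A B ↔ AbsLE (Abs θ A) (Abs θ B) :=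
  subsumes_iff_absLE_general θ A B
end

section
/- For every pre-AFS A = ⟨Π_A, Θ_A, ≈_A⟩ there exists a least extension of A to a fusion-closed pre-AFS: a pre-AFS B = ⟨Π_B, Θ_B, ≈_B⟩ that is fusion-closed, extends A (Π_A ⊆ Π_B, ≈_A ⊆ ≈_B), satisfies Θ_B(π) = Θ_A(π) for every π ∈ Π_A, and is contained in every fusion-closed pre-AFS extending A. -/
/-- every pre-AFS has a least extension to a fusion-closed pre-AFS,
preserving `Θ` on the original paths. -/
theorem exists_least_fusionClosed_extension
    {F T : Type*} [Finite F] [Finite T] [PartialOrder T]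
    (hbc : BddCompleteTypes T)
    (A : PreAFS F T) (hA : IsPreAFS A) :
    ∃ B : PreAFS F T, IsPreAFS B ∧ FusionClosed B ∧
      A.dom ⊆ B.dom ∧ (∀ x y, A.rel x y → B.rel x y) ∧
      (∀ π ∈ A.dom, B.theta π = A.theta π) ∧
      ∀ C : PreAFS F T, IsPreAFS C → FusionClosed C →
        A.dom ⊆ C.dom → (∀ x y, A.rel x y → C.rel x y) →
        B.dom ⊆ C.dom ∧ ∀ x y, B.rel x y → C.rel x y := by
  classical
  obtain ⟨π₀, hπ₀⟩ := hA.1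
  let Ext : PreAFS F T → Prop := fun C =>
    IsPreAFS C ∧ FusionClosed C ∧ A.dom ⊆ C.dom ∧ ∀ x y, A.rel x y → C.rel x y
  let D : Set (List F) := {π | ∀ C, Ext C → π ∈ C.dom}
  let t₀ : T := (A.theta π₀).get hπ₀
  let B : PreAFS F T :=
    { theta := fun π => if π ∈ A.dom then A.theta π else if π ∈ D then some t₀ else none,
      rel := fun x y => ∀ C, Ext C → C.rel x y }
  have hADsub : A.dom ⊆ D := fun π hπ C hC => hC.2.2.1 hπ
  have hBdom : B.dom = D := by
    ext π
    constructor
    · intro h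
      by_cases h1 : π ∈ A.dom
      · exact hADsub h1
      · by_contra h2
        have hn : B.theta π = none := by simp only [B, if_neg h1, if_neg h2]
        rw [PreAFS.dom, Set.mem_setOf_eq, hn] at h
        simp at h
    · intro h
      by_cases h1 : π ∈ A.dom
      · have hn : B.theta π = A.theta π := by simp only [B, if_pos h1]
        rw [PreAFS.dom, Set.mem_setOf_eq, hn]; exact h1
      · have hn : B.theta π = some t₀ := by simp only [B, if_neg h1, if_pos h]
        rw [PreAFS.dom, Set.mem_setOf_eq, hn]; simp
  refine ⟨B, ?_, ?_, ?_, ?_, ?_, ?_⟩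
  · constructor
    · exact ⟨π₀, hBdom ▸ hADsub hπ₀⟩
    · intro π₁ π₂ h
      rw [hBdom]
      exact ⟨fun C hC => (hC.1.2 π₁ π₂ (h C hC)).1, fun C hC => (hC.1.2 π₁ π₂ (h C hC)).2⟩
  · intro π π' α α' h1 h2 hr
    rw [hBdom] at h1 h2 ⊢
    refine ⟨fun C hC => ((hC.2.1 π π' α α' (h1 C hC) (h2 C hC) (hr C hC))).1,
      fun C hC => ((hC.2.1 π π' α α' (h1 C hC) (h2 C hC) (hr C hC))).2.1,
      fun C hC => ((hC.2.1 π π' α α' (h1 C hC) (h2 C hC) (hr C hC))).2.2.1,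
      fun C hC => ((hC.2.1 π π' α α' (h1 C hC) (h2 C hC) (hr C hC))).2.2.2⟩
  · rw [hBdom]; exact hADsub
  · exact fun x y h C hC => hC.2.2.2 x y h
  · intro π hπ
    show (if π ∈ A.dom then A.theta π else _) = A.theta π
    rw [if_pos hπ]
  · intro C hC1 hC2 hC3 hC4
    have hCE : Ext C := ⟨hC1, hC2, hC3, hC4⟩
    exact ⟨by rw [hBdom]; exact fun π hπ => hπ C hCE, fun x y h => h C hCE⟩
end

section
/- The fusion-closure operation Cl preserves prefix-closedness: if A is a prefix-closed pre-AFS and A′ = Cl(A) is its least extension to a fusion-closed pre-AFS, then A′ is prefix-closed. -/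
/-- `Cl` preserves prefix-closedness: if `A` is a prefix-closed
pre-AFS and `A′` is its least extension to a fusion-closed pre-AFS, then `A′`
is prefix-closed. -/
theorem cl_preserves_prefixClosed
    {F T : Type*} [Finite F] [Finite T] [PartialOrder T]
    (hbc : BddCompleteTypes T)
    (A A' : PreAFS F T) (hA : IsPreAFS A) (hpre : PrefixClosed A)
    (hA' : IsPreAFS A') (hfc : FusionClosed A')
    (hdom : A.dom ⊆ A'.dom) (hrel : ∀ x y, A.rel x y → A'.rel x y)
    (htheta : ∀ π ∈ A.dom, A'.theta π = A.theta π)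
    (hleast : ∀ C : PreAFS F T, IsPreAFS C → FusionClosed C →
      A.dom ⊆ C.dom → (∀ x y, A.rel x y → C.rel x y) →
      A'.dom ⊆ C.dom ∧ ∀ x y, A'.rel x y → C.rel x y) :
    PrefixClosed A' := by
  classical
  -- P π : every prefix of π is in A'.dom
  set P : List F → Prop := fun π => ∀ σ, σ <+: π → σ ∈ A'.dom with hP
  set C : PreAFS F T :=
    ⟨fun π => if P π then A'.theta π else none,
     fun x y => A'.rel x y ∧ P x ∧ P y⟩ with hCdef
  have hCdom : ∀ π, π ∈ C.dom ↔ (π ∈ A'.dom ∧ P π) := by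
    intro π
    show (if P π then A'.theta π else none).isSome ↔ _
    by_cases h : P π
    · simp only [if_pos h]
      exact ⟨fun hs => ⟨hs, h⟩, fun h' => h'.1⟩
    · simp only [if_neg h, Option.isSome_none]
      constructor
      · intro hs; simp at hs
      · intro h'; exact absurd h'.2 h
  -- A ⊆ C
  have hPA : ∀ π ∈ A.dom, P π := by
    intro π hπ σ hσ
    obtain ⟨τ, rfl⟩ := hσ
    exact hdom (hpre σ τ hπ)
  have hAC : A.dom ⊆ C.dom := fun π hπ => (hCdom π).2 ⟨hdom hπ, hPA π hπ⟩
  have hACrel : ∀ x y, A.rel x y → C.rel x y := by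
    intro x y h
    obtain ⟨hx, hy⟩ := hA.2 x y h
    exact ⟨hrel x y h, hPA x hx, hPA y hy⟩
  -- C is a pre-AFS
  have hCpre : IsPreAFS C := by
    constructor
    · obtain ⟨π, hπ⟩ := hA.1
      exact ⟨π, hAC hπ⟩
    · rintro π₁ π₂ ⟨h, h1, h2⟩
      obtain ⟨hd1, hd2⟩ := hA'.2 π₁ π₂ h
      exact ⟨(hCdom π₁).2 ⟨hd1, h1⟩, (hCdom π₂).2 ⟨hd2, h2⟩⟩
  -- C is fusion-closed
  have hCfc : FusionClosed C := by
    rintro π π' α α' h1 h2 ⟨hr, hPπ, hPπ'⟩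
    rw [hCdom] at h1 h2
    obtain ⟨hd1, hQ1⟩ := h1
    obtain ⟨hd2, hQ2⟩ := h2
    have hπd : π ∈ A'.dom := (hA'.2 π π' hr).1
    have hπ'd : π' ∈ A'.dom := (hA'.2 π π' hr).2
    have hsymm : A'.rel π' π := by
      have := hfc π π' [] [] (by simpa using hπd) (by simpa using hπ'd) hr
      simpa using this.2.2.2
    -- transfer lemmas
    have step : ∀ β, π' ++ β ∈ A'.dom → π ++ β ∈ A'.dom := by
      intro β hb
      exact (hfc π π' [] β (by simpa using hπd) hb hr).1
    have step' : ∀ β, π ++ β ∈ A'.dom → π' ++ β ∈ A'.dom := by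
      intro β hb
      exact (hfc π' π [] β (by simpa using hπ'd) hb hsymm).1
    obtain ⟨hda', hdb', hrr1, hrr2⟩ := hfc π π' α α' hd1 hd2 hr
    have hPπα' : P (π ++ α') := by
      intro σ hσ
      rcases List.prefix_or_prefix_of_prefix hσ (List.prefix_append π α') with h | h
      · exact hPπ σ h
      · obtain ⟨β, rfl⟩ := h
        have hβ : β <+: α' := (List.prefix_append_right_inj π).mp hσ
        have : π' ++ β ∈ A'.dom :=
          hQ2 (π' ++ β) ((List.prefix_append_right_inj π').mpr hβ)
        exact step β this
    have hPπ'α : P (π' ++ α) := by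
      intro σ hσ
      rcases List.prefix_or_prefix_of_prefix hσ (List.prefix_append π' α) with h | h
      · exact hPπ' σ h
      · obtain ⟨β, rfl⟩ := h
        have hβ : β <+: α := (List.prefix_append_right_inj π').mp hσ
        have : π ++ β ∈ A'.dom :=
          hQ1 (π ++ β) ((List.prefix_append_right_inj π).mpr hβ)
        exact step' β this
    refine ⟨(hCdom _).2 ⟨hda', hPπα'⟩, (hCdom _).2 ⟨hdb', hPπ'α⟩,
      ⟨hrr1, hPπα', hQ2⟩, ⟨hrr2, hPπ'α, hQ1⟩⟩
  -- conclude by leastness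
  obtain ⟨hsub, -⟩ := hleast C hCpre hCfc hAC hACrel
  intro π α h
  have := (hCdom (π ++ α)).1 (hsub h)
  exact this.2 π (List.prefix_append π α)
end

section
/- The equivalence-closure operation Eq preserves prefix-closedness and fusion-closedness: if A is a prefix-closed and fusion-closed pre-AFS and A′ = Eq(A) is obtained from A by replacing ≈ with its least extension to an equivalence relation on Π (keeping Π and Θ unchanged), then A′ is prefix-closed and fusion-closed. -/
/-- The least extension of `≈` to an equivalence relation on `Π`. -/
inductive EqClo {F T : Type*} (A : PreAFS F T) : List F → List F → Prop
  | base {x y} : A.rel x y → EqClo A x y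
  | refl {x} : x ∈ A.dom → EqClo A x x
  | symm {x y} : EqClo A x y → EqClo A y x
  | trans {x y z} : EqClo A x y → EqClo A y z → EqClo A x z

/-- `Eq(⟨Π,Θ,≈⟩) = ⟨Π,Θ,≈′⟩` where `≈′` is the least equivalence relation
on `Π` containing `≈`. -/
def EqOp {F T : Type*} (A : PreAFS F T) : PreAFS F T := ⟨A.theta, EqClo A⟩

lemma eqClo_shift {F T : Type*} (A : PreAFS F T) (hA : IsPreAFS A)
    (hfc : FusionClosed A) {x y : List F} (h : EqClo A x y) :
    ∀ α : List F,
      (x ++ α ∈ A.dom → y ++ α ∈ A.dom ∧ EqClo A (x ++ α) (y ++ α)) ∧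
      (y ++ α ∈ A.dom → x ++ α ∈ A.dom ∧ EqClo A (y ++ α) (x ++ α)) := by
  induction h with
  | @base x y hr =>
    intro α
    have hx : x ∈ A.dom := (hA.2 _ _ hr).1
    have hy : y ∈ A.dom := (hA.2 _ _ hr).2
    constructor
    · intro hxα
      have hy' : y ++ ([] : List F) ∈ A.dom := by simpa using hy
      obtain ⟨_, h2, _, h4⟩ := hfc x y α [] hxα hy' hr
      simpa using ⟨h2, (EqClo.base h4).symm⟩
    · intro hyα
      have hx' : x ++ ([] : List F) ∈ A.dom := by simpa using hx
      obtain ⟨h1, _, h3, _⟩ := hfc x y [] α hx' hyα hr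
      exact ⟨h1, (EqClo.base h3).symm⟩
  | refl hx => intro α; exact ⟨fun h => ⟨h, EqClo.refl h⟩, fun h => ⟨h, EqClo.refl h⟩⟩
  | symm h ih => intro α; exact ⟨(ih α).2, (ih α).1⟩
  | trans h1 h2 ih1 ih2 =>
    intro α
    constructor
    · intro hx
      obtain ⟨hy, e1⟩ := (ih1 α).1 hx
      obtain ⟨hz, e2⟩ := (ih2 α).1 hy
      exact ⟨hz, e1.trans e2⟩
    · intro hz
      obtain ⟨hy, e2⟩ := (ih2 α).2 hz
      obtain ⟨hx, e1⟩ := (ih1 α).2 hy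
      exact ⟨hx, e2.trans e1⟩

/-- `Eq` preserves prefix-closedness and fusion-closedness. -/
theorem eqOp_preserves_closures
    {F T : Type*} [Finite F] [Finite T] [PartialOrder T]
    (hbc : BddCompleteTypes T)
    (A : PreAFS F T) (hA : IsPreAFS A)
    (hpre : PrefixClosed A) (hfc : FusionClosed A) :
    PrefixClosed (EqOp A) ∧ FusionClosed (EqOp A) := by
  constructor
  · exact hpre
  · intro π π' α α' hπα hπ'α' hrel
    obtain ⟨h1, e1⟩ := (eqClo_shift A hA hfc hrel α).1 hπα
    obtain ⟨h2, e2⟩ := (eqClo_shift A hA hfc hrel α').2 hπ'α'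
    exact ⟨h2, h1, e2.symm, e1.symm⟩
end

section
/- Unification of abstract feature structures is associative: for all AFSs A, B and C, (A ⊔ B) ⊔ C = A ⊔ (B ⊔ C). -/
/-- Fusion-closedness of a pair (path set, relation). -/
def fusionClosedPair {F : Type*} (D : Set (List F)) (R : List F → List F → Prop) : Prop :=
  ∀ π π' α α' : List F, π ++ α ∈ D → π' ++ α' ∈ D → R π π' →
    π ++ α' ∈ D ∧ π' ++ α ∈ D ∧ R (π ++ α') (π' ++ α') ∧ R (π' ++ α) (π ++ α)

/-- The path set of the least fusion-closed extension. -/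
def clDom {F T : Type*} (A : PreAFS F T) : Set (List F) :=
  {π | ∀ (D : Set (List F)) (R : List F → List F → Prop),
    A.dom ⊆ D → (∀ x y, A.rel x y → R x y) → fusionClosedPair D R → π ∈ D}

/-- The reentrancy relation of the least fusion-closed extension. -/
def clRel {F T : Type*} (A : PreAFS F T) (x y : List F) : Prop :=
  ∀ (D : Set (List F)) (R : List F → List F → Prop),
    A.dom ⊆ D → (∀ a b, A.rel a b → R a b) → fusionClosedPair D R → R x y

open Classical in
/-- `Cl(A)`: the least extension of `A` to a fusion-closed pre-AFS
(`Θ` is kept on old paths; newly added paths get the trivial type `⊥`,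
to be fixed up later by `Ty`). -/
noncomputable def Cl {F T : Type*} [CompleteLattice T] (A : PreAFS F T) : PreAFS F T :=
  ⟨fun π => if π ∈ clDom A then some ((A.theta π).getD ⊥) else none, clRel A⟩

/-- `Ty(⟨Π,Θ,≈⟩) = ⟨Π,Θ′,≈⟩` where `Θ′(π) = ⊔_{π′ ≈ π} Θ(π′)`. -/
noncomputable def Ty {F T : Type*} [CompleteLattice T] (A : PreAFS F T) : PreAFS F T :=
  ⟨fun π => if (A.theta π).isSome then
      some (sSup {t | ∃ π', A.rel π π' ∧ A.theta π' = some t})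
    else none,
   A.rel⟩

/-- The pre-AFS `C` of the definition of unification: `Π_C = Π_A ∪ Π_B`,
`≈_C = ≈_A ∪ ≈_B`, and `Θ_C` is the pointwise type unification. -/
noncomputable def baseUnif {F T : Type*} [CompleteLattice T] (A B : PreAFS F T) :
    PreAFS F T :=
  ⟨fun π => match A.theta π, B.theta π with
    | some t₁, some t₂ => some (t₁ ⊔ t₂)
    | some t₁, none => some t₁
    | none, some t₂ => some t₂
    | none, none => none,
   fun x y => A.rel x y ∨ B.rel x y⟩

/-- The unification `A ⊔ B = Ty(Eq(Cl(C)))` of two AFSs. -/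
noncomputable def unif {F T : Type*} [CompleteLattice T] (A B : PreAFS F T) : PreAFS F T :=
  Ty (EqOp (Cl (baseUnif A B)))

section Assoc

variable {F T : Type*}

/-- The relation is contained in the domain square. -/
def RelDom (X : PreAFS F T) : Prop := ∀ a b, X.rel a b → a ∈ X.dom ∧ b ∈ X.dom

lemma dom_subset_clDom (X : PreAFS F T) : X.dom ⊆ clDom X :=
  fun _ hπ _ _ hD _ _ => hD hπ

lemma rel_clRel (X : PreAFS F T) {a b} (h : X.rel a b) : clRel X a b :=
  fun _ _ _ hR _ => hR a b h

lemma clDom_min (X : PreAFS F T) {D : Set (List F)} {R : List F → List F → Prop}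
    (hD : X.dom ⊆ D) (hR : ∀ a b, X.rel a b → R a b) (hfc : fusionClosedPair D R) :
    clDom X ⊆ D := fun _ hπ => hπ D R hD hR hfc

lemma clRel_min (X : PreAFS F T) {D : Set (List F)} {R : List F → List F → Prop}
    (hD : X.dom ⊆ D) (hR : ∀ a b, X.rel a b → R a b) (hfc : fusionClosedPair D R)
    {a b} (h : clRel X a b) : R a b := h D R hD hR hfc

lemma clFC (X : PreAFS F T) : fusionClosedPair (clDom X) (clRel X) := by
  intro π π' α α' h1 h2 h3
  refine ⟨?_, ?_, ?_, ?_⟩ <;> intro D R hD hR hfc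
  · exact (hfc π π' α α' (h1 D R hD hR hfc) (h2 D R hD hR hfc) (h3 D R hD hR hfc)).1
  · exact (hfc π π' α α' (h1 D R hD hR hfc) (h2 D R hD hR hfc) (h3 D R hD hR hfc)).2.1
  · exact (hfc π π' α α' (h1 D R hD hR hfc) (h2 D R hD hR hfc) (h3 D R hD hR hfc)).2.2.1
  · exact (hfc π π' α α' (h1 D R hD hR hfc) (h2 D R hD hR hfc) (h3 D R hD hR hfc)).2.2.2

lemma clRel_mem (X : PreAFS F T) (hX : RelDom X) {a b} (h : clRel X a b) :
    a ∈ clDom X ∧ b ∈ clDom X := by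
  have key := h (clDom X) (fun a b => clRel X a b ∧ a ∈ clDom X ∧ b ∈ clDom X)
    (dom_subset_clDom X)
    (fun a b hab => ⟨rel_clRel X hab, dom_subset_clDom X (hX a b hab).1,
      dom_subset_clDom X (hX a b hab).2⟩)
    (by
      rintro π π' α α' h1 h2 ⟨hr, -, -⟩
      obtain ⟨m1, m2, r1, r2⟩ := clFC X π π' α α' h1 h2 hr
      exact ⟨m1, m2, ⟨r1, m1, h2⟩, ⟨r2, m2, h1⟩⟩)
  exact ⟨key.2.1, key.2.2⟩

variable [CompleteLattice T]

lemma Cl_dom (X : PreAFS F T) : (Cl X).dom = clDom X := by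
  ext π
  by_cases h : π ∈ clDom X <;> simp [Cl, PreAFS.dom, h]

lemma Cl_rel (X : PreAFS F T) : (Cl X).rel = clRel X := rfl

lemma Cl_theta_some (X : PreAFS F T) {π : List F} {t : T} :
    (Cl X).theta π = some t ↔ π ∈ clDom X ∧ t = (X.theta π).getD ⊥ := by
  by_cases h : π ∈ clDom X <;> simp [Cl, h, eq_comm]

lemma EqClo_mem (X : PreAFS F T) (hX : RelDom X) {a b} (h : EqClo (Cl X) a b) :
    a ∈ clDom X ∧ b ∈ clDom X := by
  induction h with
  | base hr => exact clRel_mem X hX hr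
  | refl hx => rw [Cl_dom] at hx; exact ⟨hx, hx⟩
  | symm h ih => exact ⟨ih.2, ih.1⟩
  | trans h1 h2 ih1 ih2 => exact ⟨ih1.1, ih2.2⟩

lemma eqClo_fc_aux (X : PreAFS F T) (hX : RelDom X) {π π'} (h : EqClo (Cl X) π π') :
    ∀ α α', π ++ α ∈ clDom X → π' ++ α' ∈ clDom X →
      π ++ α' ∈ clDom X ∧ π' ++ α ∈ clDom X ∧
        EqClo (Cl X) (π ++ α') (π' ++ α') ∧ EqClo (Cl X) (π' ++ α) (π ++ α) := by
  induction h with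
  | @base x y hr =>
    intro α α' h1 h2
    obtain ⟨m1, m2, r1, r2⟩ := clFC X x y α α' h1 h2 hr
    exact ⟨m1, m2, EqClo.base r1, EqClo.base r2⟩
  | @refl x hx =>
    intro α α' h1 h2
    exact ⟨h2, h1, EqClo.refl (by rw [Cl_dom]; exact h2),
      EqClo.refl (by rw [Cl_dom]; exact h1)⟩
  | @symm x y h ih =>
    intro α α' h1 h2
    obtain ⟨m1, m2, r1, r2⟩ := ih α' α h2 h1
    exact ⟨m2, m1, r2, r1⟩
  | @trans x y z h1 h2 ih1 ih2 =>
    intro α α' ha hz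
    have hy : y ∈ clDom X := (EqClo_mem X hX h1).2
    have hy' : y ++ ([] : List F) ∈ clDom X := by simpa using hy
    obtain ⟨-, hyα, -, -⟩ := ih1 α [] ha hy'
    obtain ⟨hyα', hzα, r1, r2⟩ := ih2 α α' hyα hz
    obtain ⟨hxα', -, r3, r4⟩ := ih1 α α' ha hyα'
    exact ⟨hxα', hzα, r3.trans r1, r2.trans r4⟩

lemma eqClo_fc (X : PreAFS F T) (hX : RelDom X) :
    fusionClosedPair (clDom X) (fun a b => EqClo (Cl X) a b) :=
  fun π π' α α' h1 h2 h3 => eqClo_fc_aux X hX h3 α α' h1 h2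

lemma baseUnif_dom (X Y : PreAFS F T) : (baseUnif X Y).dom = X.dom ∪ Y.dom := by
  ext π
  simp only [PreAFS.dom, Set.mem_setOf_eq, Set.mem_union, baseUnif]
  cases hx : X.theta π <;> cases hy : Y.theta π <;> simp

lemma baseUnif_rel (X Y : PreAFS F T) {a b} :
    (baseUnif X Y).rel a b ↔ X.rel a b ∨ Y.rel a b := Iff.rfl

lemma baseUnif_getD (X Y : PreAFS F T) (π : List F) :
    ((baseUnif X Y).theta π).getD ⊥ = (X.theta π).getD ⊥ ⊔ (Y.theta π).getD ⊥ := by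
  simp only [baseUnif]
  cases hx : X.theta π <;> cases hy : Y.theta π <;> simp

lemma getD_of_not_mem {X : PreAFS F T} {π : List F} (h : π ∉ X.dom) :
    (X.theta π).getD ⊥ = ⊥ := by
  simp only [PreAFS.dom, Set.mem_setOf_eq, Option.not_isSome_iff_eq_none] at h
  simp [h]

lemma unif_dom (X Y : PreAFS F T) : (unif X Y).dom = clDom (baseUnif X Y) := by
  ext π
  by_cases h : π ∈ clDom (baseUnif X Y) <;>
    simp [unif, Ty, EqOp, Cl, PreAFS.dom, h]

lemma unif_rel (X Y : PreAFS F T) {a b} :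
    (unif X Y).rel a b ↔ EqClo (Cl (baseUnif X Y)) a b := Iff.rfl

lemma relDom_baseUnif {X Y : PreAFS F T} (hX : RelDom X) (hY : RelDom Y) :
    RelDom (baseUnif X Y) := by
  intro a b h
  rw [baseUnif_dom]
  rcases h with h | h
  · exact ⟨Or.inl (hX a b h).1, Or.inl (hX a b h).2⟩
  · exact ⟨Or.inr (hY a b h).1, Or.inr (hY a b h).2⟩

lemma relDom_unif {X Y : PreAFS F T} (h : RelDom (baseUnif X Y)) :
    RelDom (unif X Y) := by
  intro a b hab
  rw [unif_dom]
  exact EqClo_mem _ h hab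

lemma unif_incl (X Y : PreAFS F T) {D : Set (List F)} {R : List F → List F → Prop}
    (hXD : X.dom ⊆ D) (hYD : Y.dom ⊆ D)
    (hXR : ∀ a b, X.rel a b → R a b) (hYR : ∀ a b, Y.rel a b → R a b)
    (hfc : fusionClosedPair D R) (hrefl : ∀ x ∈ D, R x x)
    (hsymm : ∀ a b, R a b → R b a) (htrans : ∀ a b c, R a b → R b c → R a c) :
    (unif X Y).dom ⊆ D ∧ ∀ a b, (unif X Y).rel a b → R a b := by
  have hD : (baseUnif X Y).dom ⊆ D := by
    rw [baseUnif_dom]; exact Set.union_subset hXD hYD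
  have hR : ∀ a b, (baseUnif X Y).rel a b → R a b := fun a b h =>
    h.elim (hXR a b) (hYR a b)
  constructor
  · rw [unif_dom]; exact clDom_min _ hD hR hfc
  · intro a b hab
    rw [unif_rel] at hab
    induction hab with
    | base hr => exact clRel_min _ hD hR hfc hr
    | refl hx => exact hrefl _ (clDom_min _ hD hR hfc (by rwa [Cl_dom] at hx))
    | symm h ih => exact hsymm _ _ ih
    | trans h1 h2 ih1 ih2 => exact htrans _ _ _ ih1 ih2

open Classical in
lemma unif_theta (X Y : PreAFS F T) (hXY : RelDom (baseUnif X Y)) (π : List F) :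
    (unif X Y).theta π = if π ∈ clDom (baseUnif X Y) then
      some (sSup {t | ∃ π', EqClo (Cl (baseUnif X Y)) π π' ∧
        t = ((baseUnif X Y).theta π').getD ⊥}) else none := by
  by_cases h : π ∈ clDom (baseUnif X Y)
  · rw [if_pos h]
    have hsome : ((Cl (baseUnif X Y)).theta π).isSome := by
      simp [Cl, h]
    simp only [unif, Ty, EqOp, hsome, if_true]
    congr 2
    ext t
    simp only [Set.mem_setOf_eq]
    constructor
    · rintro ⟨π', hrel, heq⟩
      exact ⟨π', hrel, ((Cl_theta_some _).1 heq).2⟩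
    · rintro ⟨π', hrel, heq⟩
      exact ⟨π', hrel, (Cl_theta_some _).2 ⟨(EqClo_mem _ hXY hrel).2, heq⟩⟩
  · have hnone : (Cl (baseUnif X Y)).theta π = none := by
      simp [Cl, h]
    rw [if_neg h]
    simp [unif, Ty, EqOp, hnone]

open Classical in
lemma unif_theta_getD (X Y : PreAFS F T) (hXY : RelDom (baseUnif X Y)) (π : List F) :
    ((unif X Y).theta π).getD ⊥ =
      sSup {t | ∃ π', EqClo (Cl (baseUnif X Y)) π π' ∧
        t = ((baseUnif X Y).theta π').getD ⊥} := by
  rw [unif_theta X Y hXY]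
  by_cases h : π ∈ clDom (baseUnif X Y)
  · simp [h]
  · rw [if_neg h]
    have : {t | ∃ π', EqClo (Cl (baseUnif X Y)) π π' ∧
        t = ((baseUnif X Y).theta π').getD ⊥} = (∅ : Set T) := by
      ext t
      simp only [Set.mem_setOf_eq, Set.mem_empty_iff_false, iff_false]
      rintro ⟨π', hrel, -⟩
      exact h (EqClo_mem _ hXY hrel).1
    simp [this]

lemma PreAFS.ext {X Y : PreAFS F T} (h1 : X.theta = Y.theta) (h2 : X.rel = Y.rel) :
    X = Y := by
  cases X; cases Y; simp_all

/-- The key sSup collapse lemma. -/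
lemma sSup_collapse {R R' : List F → List F → Prop} {g h : List F → T} (π : List F)
    (hsub : ∀ a b, R' a b → R a b)
    (htrans : ∀ a b c, R a b → R b c → R a c)
    (hg : ∀ π', g π' ≤ sSup {s | ∃ π'', R' π' π'' ∧ s = g π''}) :
    sSup {t | ∃ π', R π π' ∧ t = sSup {s | ∃ π'', R' π' π'' ∧ s = g π''} ⊔ h π'} =
      sSup {t | ∃ π', R π π' ∧ t = g π' ⊔ h π'} := by
  apply le_antisymm
  · apply sSup_le
    rintro t ⟨π', hπ', rfl⟩
    apply sup_le
    · apply sSup_le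
      rintro s ⟨π'', h'', rfl⟩
      exact le_trans le_sup_left (le_sSup ⟨π'', htrans _ _ _ hπ' (hsub _ _ h''), rfl⟩)
    · exact le_trans le_sup_right (le_sSup ⟨π', hπ', rfl⟩)
  · apply sSup_le
    rintro t ⟨π', hπ', rfl⟩
    refine le_trans (sup_le_sup_right (hg π') (h π')) ?_
    exact le_sSup ⟨π', hπ', rfl⟩

end Assoc
/-- unification of AFSs is associative. -/
theorem unif_assoc
    {F T : Type*} [Finite F] [Finite T] [CompleteLattice T]
    (A B C : PreAFS F T) (hA : IsAFS A) (hB : IsAFS B) (hC : IsAFS C) :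
    unif (unif A B) C = unif A (unif B C) := by
  have rdA : RelDom A := hA.1.2
  have rdB : RelDom B := hB.1.2
  have rdC : RelDom C := hC.1.2
  have rdAB : RelDom (baseUnif A B) := relDom_baseUnif rdA rdB
  have rdBC : RelDom (baseUnif B C) := relDom_baseUnif rdB rdC
  have rdUAB : RelDom (unif A B) := relDom_unif rdAB
  have rdUBC : RelDom (unif B C) := relDom_unif rdBC
  have rdL : RelDom (baseUnif (unif A B) C) := relDom_baseUnif rdUAB rdC
  have rdR : RelDom (baseUnif A (unif B C)) := relDom_baseUnif rdA rdUBC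
  -- closure properties of the two sides
  have fcL : fusionClosedPair (unif (unif A B) C).dom (unif (unif A B) C).rel := by
    rw [unif_dom]; exact eqClo_fc _ rdL
  have fcR : fusionClosedPair (unif A (unif B C)).dom (unif A (unif B C)).rel := by
    rw [unif_dom]; exact eqClo_fc _ rdR
  have reflL : ∀ x ∈ (unif (unif A B) C).dom, (unif (unif A B) C).rel x x := by
    intro x hx
    rw [unif_dom] at hx
    exact EqClo.refl (by rw [Cl_dom]; exact hx)
  have reflR : ∀ x ∈ (unif A (unif B C)).dom, (unif A (unif B C)).rel x x := by
    intro x hx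
    rw [unif_dom] at hx
    exact EqClo.refl (by rw [Cl_dom]; exact hx)
  have symmL : ∀ a b, (unif (unif A B) C).rel a b → (unif (unif A B) C).rel b a :=
    fun _ _ h => EqClo.symm h
  have symmR : ∀ a b, (unif A (unif B C)).rel a b → (unif A (unif B C)).rel b a :=
    fun _ _ h => EqClo.symm h
  have transL : ∀ a b c, (unif (unif A B) C).rel a b → (unif (unif A B) C).rel b c →
      (unif (unif A B) C).rel a c := fun _ _ _ h1 h2 => EqClo.trans h1 h2
  have transR : ∀ a b c, (unif A (unif B C)).rel a b → (unif A (unif B C)).rel b c →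
      (unif A (unif B C)).rel a c := fun _ _ _ h1 h2 => EqClo.trans h1 h2
  -- basic inclusions of unif components
  have domXL : ∀ X Y : PreAFS F T, X.dom ⊆ (unif X Y).dom := by
    intro X Y
    rw [unif_dom]
    exact subset_trans (by rw [baseUnif_dom]; exact Set.subset_union_left)
      (dom_subset_clDom _)
  have domYR : ∀ X Y : PreAFS F T, Y.dom ⊆ (unif X Y).dom := by
    intro X Y
    rw [unif_dom]
    exact subset_trans (by rw [baseUnif_dom]; exact Set.subset_union_right)
      (dom_subset_clDom _)
  have relXL : ∀ (X Y : PreAFS F T) a b, X.rel a b → (unif X Y).rel a b :=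
    fun X Y a b h => EqClo.base (rel_clRel _ (Or.inl h))
  have relYR : ∀ (X Y : PreAFS F T) a b, Y.rel a b → (unif X Y).rel a b :=
    fun X Y a b h => EqClo.base (rel_clRel _ (Or.inr h))
  -- A, B, C sit inside both sides
  have hAdL : A.dom ⊆ (unif (unif A B) C).dom :=
    subset_trans (domXL A B) (domXL (unif A B) C)
  have hBdL : B.dom ⊆ (unif (unif A B) C).dom :=
    subset_trans (domYR A B) (domXL (unif A B) C)
  have hCdL : C.dom ⊆ (unif (unif A B) C).dom := domYR (unif A B) C
  have hAdR : A.dom ⊆ (unif A (unif B C)).dom := domXL A (unif B C)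
  have hBdR : B.dom ⊆ (unif A (unif B C)).dom :=
    subset_trans (domXL B C) (domYR A (unif B C))
  have hCdR : C.dom ⊆ (unif A (unif B C)).dom :=
    subset_trans (domYR B C) (domYR A (unif B C))
  have hArL : ∀ a b, A.rel a b → (unif (unif A B) C).rel a b :=
    fun a b h => relXL (unif A B) C a b (relXL A B a b h)
  have hBrL : ∀ a b, B.rel a b → (unif (unif A B) C).rel a b :=
    fun a b h => relXL (unif A B) C a b (relYR A B a b h)
  have hCrL : ∀ a b, C.rel a b → (unif (unif A B) C).rel a b := relYR (unif A B) C
  have hArR : ∀ a b, A.rel a b → (unif A (unif B C)).rel a b := relXL A (unif B C)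
  have hBrR : ∀ a b, B.rel a b → (unif A (unif B C)).rel a b :=
    fun a b h => relYR A (unif B C) a b (relXL B C a b h)
  have hCrR : ∀ a b, C.rel a b → (unif A (unif B C)).rel a b :=
    fun a b h => relYR A (unif B C) a b (relYR B C a b h)
  -- unif A B is contained in both sides
  have hABL := unif_incl A B hAdL hBdL hArL hBrL fcL reflL symmL transL
  have hABR := unif_incl A B hAdR hBdR hArR hBrR fcR reflR symmR transR
  have hBCL := unif_incl B C hBdL hCdL hBrL hCrL fcL reflL symmL transL
  have hBCR := unif_incl B C hBdR hCdR hBrR hCrR fcR reflR symmR transR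
  -- each side is contained in the other
  have hLR := unif_incl (unif A B) C hABR.1 hCdR hABR.2 hCrR fcR reflR symmR transR
  have hRL := unif_incl A (unif B C) hAdL hBCL.1 hArL hBCL.2 fcL reflL symmL transL
  have domEq : (unif (unif A B) C).dom = (unif A (unif B C)).dom :=
    Set.Subset.antisymm hLR.1 hRL.1
  have relIff : ∀ a b, (unif (unif A B) C).rel a b ↔ (unif A (unif B C)).rel a b :=
    fun a b => ⟨hLR.2 a b, hRL.2 a b⟩
  have clEq : clDom (baseUnif (unif A B) C) = clDom (baseUnif A (unif B C)) := by
    rw [← unif_dom, ← unif_dom]; exact domEq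
  -- theta values
  have keyL : ∀ π' : List F, ((baseUnif (unif A B) C).theta π').getD ⊥ =
      sSup {s | ∃ π'', EqClo (Cl (baseUnif A B)) π' π'' ∧
        s = ((baseUnif A B).theta π'').getD ⊥} ⊔ (C.theta π').getD ⊥ := by
    intro π'
    rw [baseUnif_getD, unif_theta_getD _ _ rdAB]
  have keyR : ∀ π' : List F, ((baseUnif A (unif B C)).theta π').getD ⊥ =
      sSup {s | ∃ π'', EqClo (Cl (baseUnif B C)) π' π'' ∧
        s = ((baseUnif B C).theta π'').getD ⊥} ⊔ (A.theta π').getD ⊥ := by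
    intro π'
    rw [baseUnif_getD, unif_theta_getD _ _ rdBC, sup_comm]
  have hgAB : ∀ π' : List F, ((baseUnif A B).theta π').getD ⊥ ≤
      sSup {s | ∃ π'', EqClo (Cl (baseUnif A B)) π' π'' ∧
        s = ((baseUnif A B).theta π'').getD ⊥} := by
    intro π'
    by_cases h : π' ∈ clDom (baseUnif A B)
    · exact le_sSup ⟨π', EqClo.refl (by rw [Cl_dom]; exact h), rfl⟩
    · rw [getD_of_not_mem (fun hm => h (dom_subset_clDom _ hm))]
      exact bot_le
  have hgBC : ∀ π' : List F, ((baseUnif B C).theta π').getD ⊥ ≤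
      sSup {s | ∃ π'', EqClo (Cl (baseUnif B C)) π' π'' ∧
        s = ((baseUnif B C).theta π'').getD ⊥} := by
    intro π'
    by_cases h : π' ∈ clDom (baseUnif B C)
    · exact le_sSup ⟨π', EqClo.refl (by rw [Cl_dom]; exact h), rfl⟩
    · rw [getD_of_not_mem (fun hm => h (dom_subset_clDom _ hm))]
      exact bot_le
  have hθ : ∀ π, (unif (unif A B) C).theta π = (unif A (unif B C)).theta π := by
    intro π
    rw [unif_theta _ _ rdL, unif_theta _ _ rdR, clEq]
    by_cases hπ : π ∈ clDom (baseUnif A (unif B C))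
    · rw [if_pos hπ, if_pos hπ]
      congr 1
      have e1 : sSup {t | ∃ π', EqClo (Cl (baseUnif (unif A B) C)) π π' ∧
          t = ((baseUnif (unif A B) C).theta π').getD ⊥} =
          sSup {t | ∃ π', EqClo (Cl (baseUnif (unif A B) C)) π π' ∧
          t = ((baseUnif A B).theta π').getD ⊥ ⊔ (C.theta π').getD ⊥} := by
        simp only [keyL]
        exact sSup_collapse π (fun a b h => hABL.2 a b h) transL hgAB
      have e2 : sSup {t | ∃ π', EqClo (Cl (baseUnif A (unif B C))) π π' ∧
          t = ((baseUnif A (unif B C)).theta π').getD ⊥} =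
          sSup {t | ∃ π', EqClo (Cl (baseUnif A (unif B C))) π π' ∧
          t = ((baseUnif B C).theta π').getD ⊥ ⊔ (A.theta π').getD ⊥} := by
        simp only [keyR]
        exact sSup_collapse π (fun a b h => hBCR.2 a b h) transR hgBC
      rw [e1, e2]
      congr 1
      ext t
      simp only [Set.mem_setOf_eq]
      constructor
      · rintro ⟨π', hr, rfl⟩
        refine ⟨π', (relIff π π').1 hr, ?_⟩
        rw [baseUnif_getD, baseUnif_getD]
        simp only [sup_assoc, sup_comm, sup_left_comm]
      · rintro ⟨π', hr, rfl⟩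
        refine ⟨π', (relIff π π').2 hr, ?_⟩
        rw [baseUnif_getD, baseUnif_getD]
        simp only [sup_assoc, sup_comm, sup_left_comm]
    · rw [if_neg hπ, if_neg hπ]
  exact PreAFS.ext (funext hθ)
    (funext fun a => funext fun b => propext (relIff a b))
end

section
/- The unification of abstract feature structures is more specific than each of its arguments: if C′ = A ⊔ B, then A ≼ C′. -/
/-- the unification is more specific than its arguments:
if `C′ = A ⊔ B` then `A ≼ C′`. -/
theorem absLE_unif_left
    {F T : Type*} [Finite F] [Finite T] [CompleteLattice T]
    (A B C' : PreAFS F T) (hA : IsAFS A) (hB : IsAFS B)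
    (hC' : C' = unif A B) :
    AbsLE A C' := by
  subst hC'
  have hAd : A.dom ⊆ (baseUnif A B).dom := by
    intro π hπ
    simp only [PreAFS.dom, Set.mem_setOf_eq, baseUnif] at *
    cases hA' : A.theta π <;> cases hB' : B.theta π <;> simp_all
  have hcl : A.dom ⊆ clDom (baseUnif A B) := fun π hπ D R hD _ _ => hD (hAd hπ)
  have hClDom : ∀ π ∈ A.dom, π ∈ (Cl (baseUnif A B)).dom := by
    intro π hπ
    simp only [Cl, PreAFS.dom, Set.mem_setOf_eq]
    rw [if_pos (hcl hπ)]; simp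
  refine ⟨?_, ?_, ?_⟩
  · intro π hπ
    simp only [unif, Ty, EqOp, PreAFS.dom, Set.mem_setOf_eq]
    have := hClDom π hπ
    simp only [PreAFS.dom, Set.mem_setOf_eq] at this
    simp [this]
  · intro π₁ π₂ h
    exact EqClo.base (fun D R hD hR hF => hR _ _ (Or.inl h))
  · intro π hπ t₁ t₂ h₁ h₂
    have hπcl := hcl hπ
    -- value of Cl's theta at π
    set u : T := ((baseUnif A B).theta π).getD ⊥ with hu
    have hClθ : (Cl (baseUnif A B)).theta π = some u := by
      simp only [Cl]; rw [if_pos hπcl]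
    have ht₁u : t₁ ≤ u := by
      simp only [baseUnif] at hu
      cases hB' : B.theta π <;> simp [h₁, hB'] at hu <;> simp [hu]
    -- t₂ is the sSup
    have h₂' : t₂ = sSup {t | ∃ π', EqClo (Cl (baseUnif A B)) π π' ∧
        (Cl (baseUnif A B)).theta π' = some t} := by
      simp only [unif, Ty, EqOp, hClθ] at h₂
      simp at h₂
      exact h₂.symm
    rw [h₂']
    exact ht₁u.trans (le_sSup ⟨π, EqClo.refl (hClDom π hπ), hClθ⟩)
end
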